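/- Let β be the minimal Pisot number, i.e. the real root of x³ − x − 1 = 0, and let (Σ_{−β},σ) be the symbolic space of the (−β)-transformation T_{−β} (for this β one has i'(1) = 100(1)^∞, the sequence 1,0,0,1,1,1,…). Then the set of ergodic σ-invariant Borel probability measures on Σ_{−β} is not dense, in the weak topology, in the set of all σ-invariant Borel probability measures on Σ_{−β}. -/

import Mathlib

open MeasureTheory Filter Topology Set
open scoped ENNReal NNReal

attribute [local instance] Classical.propDecidable

noncomputable section

namespace OneWaySpec

/-! ### Empirical measures and the level-2 large deviation principle -/

/-- The empirical measure `(1/n) ∑_{j<n} δ_{f^j x}` (as a plain measure). -/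
noncomputable def empMeas {Y : Type*} [MeasurableSpace Y] (f : Y → Y) (x : Y) (n : ℕ) :
    Measure Y :=
  (n : ℝ≥0∞)⁻¹ • ∑ j ∈ Finset.range n, Measure.dirac (f^[j] x)

lemma empMeas_isProbabilityMeasure {Y : Type*} [MeasurableSpace Y] (f : Y → Y) (x : Y)
    {n : ℕ} (hn : n ≠ 0) : IsProbabilityMeasure (empMeas f x n) := by
  constructor
  rw [empMeas, Measure.smul_apply, Measure.finset_sum_apply]
  simp only [measure_univ, Finset.sum_const, Finset.card_range, nsmul_eq_mul, mul_one]
  exact ENNReal.inv_mul_cancel (by exact_mod_cast hn) (ENNReal.natCast_ne_top n)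

/-- The empirical measure `E_n(x) = (1/n) ∑_{j<n} δ_{f^j x}` as a probability measure
(junk value `δ_x` for `n = 0`). -/
noncomputable def empPM {Y : Type*} [MeasurableSpace Y] (f : Y → Y) (x : Y) (n : ℕ) :
    ProbabilityMeasure Y :=
  if hn : n = 0 then ⟨Measure.dirac x, inferInstance⟩
  else ⟨empMeas f x n, empMeas_isProbabilityMeasure f x hn⟩

/-- `(X,f)` satisfies a level-2 large deviation principle with reference measure `m`
and rate function `q`. -/
def LevelTwoLDP {Y : Type*} [MeasurableSpace Y] [TopologicalSpace Y] [OpensMeasurableSpace Y]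
    (f : Y → Y) (m : Measure Y) (q : ProbabilityMeasure Y → EReal) : Prop :=
  UpperSemicontinuous q ∧ (∀ μ, q μ ≤ 0) ∧
  (∀ G : Set (ProbabilityMeasure Y), IsOpen G →
    ⨆ μ ∈ G, q μ ≤ atTop.liminf fun n : ℕ =>
      (((n : ℝ)⁻¹ : ℝ) : EReal) * ENNReal.log (m {x | empPM f x n ∈ G})) ∧
  (∀ F : Set (ProbabilityMeasure Y), IsClosed F →
    (atTop.limsup fun n : ℕ =>
      (((n : ℝ)⁻¹ : ℝ) : EReal) * ENNReal.log (m {x | empPM f x n ∈ F})) ≤ ⨆ μ ∈ F, q μ)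

/-! ### Measure-theoretic (Kolmogorov–Sinai) entropy and free energy -/

/-- Shannon entropy of the finite partition of `Y` induced by `P : Y → ι`. -/
noncomputable def partEnt {Y : Type*} [MeasurableSpace Y] (μ : Measure Y)
    {ι : Type*} [Fintype ι] (P : Y → ι) : ℝ :=
  ∑ a : ι, Real.negMulLog ((μ (P ⁻¹' {a})).toReal)

/-- Kolmogorov–Sinai entropy of `μ` for `f` : the supremum over finite measurable partitions
`P` of the limit of `(1/n) H_μ(⋁_{j<n} f^{-j} P)`. -/
noncomputable def ksEntropy {Y : Type*} [MeasurableSpace Y] (f : Y → Y) (μ : Measure Y) :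
    EReal :=
  ⨆ (k : ℕ) (P : Y → Fin k) (_ : ∀ a, MeasurableSet (P ⁻¹' {a})),
    atTop.limsup fun n : ℕ =>
      ((((n : ℝ)⁻¹ * partEnt μ fun x => fun j : Fin n => P (f^[j] x)) : ℝ) : EReal)

/-- The free energy `F_φ(μ) = h(μ) - ∫ φ dμ` for `f`-invariant `μ`, and `-∞` otherwise. -/
noncomputable def freeEnergy {Y : Type*} [MeasurableSpace Y] (f : Y → Y) (φ : Y → ℝ)
    (μ : ProbabilityMeasure Y) : EReal :=
  if (μ : Measure Y).map f = (μ : Measure Y) then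
    ksEntropy f (μ : Measure Y) - (((∫ x, φ x ∂(μ : Measure Y)) : ℝ) : EReal)
  else ⊥

/-! ### Non-wandering sets, Bowen balls and the one-way specification properties -/

/-- The non-wandering set of the restriction of `f` to `X` (relative neighborhoods). -/
def nonWanderingIn {Y : Type*} [TopologicalSpace Y] (f : Y → Y) (X : Set Y) : Set Y :=
  {x ∈ X | ∀ U ∈ nhds x, ∃ n > 0, ∃ y ∈ U ∩ X, f^[n] y ∈ U ∩ X}

/-- Bowen ball `B_n(x,ε)`. -/
def bowenBall {Y : Type*} [PseudoMetricSpace Y] (f : Y → Y) (n : ℕ) (x : Y) (ε : ℝ) :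
    Set Y :=
  {y | ∀ j < n, dist (f^[j] x) (f^[j] y) ≤ ε}

/-- `∑_{t<j} (n_t + M_t)`. -/
def gapSum {k : ℕ} (n M : Fin k → ℕ) (j : Fin k) : ℕ :=
  ∑ t ∈ Finset.Iio j, (n t + M t)

/-- One-way specification property of `f` on `X` with the family of sets `Xs`,
with respect to the distance function `d`. -/
def OneWaySpecWithOn {Y : Type*} [TopologicalSpace Y] (d : Y → Y → ℝ) (f : Y → Y)
    (X : Set Y) {q : ℕ} (Xs : Fin q → Set Y) : Prop :=
  (∀ i, Xs i ⊆ X) ∧ (∀ i, IsCompact (Xs i)) ∧ (∀ i, f '' Xs i ⊆ Xs i) ∧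
  nonWanderingIn f X = (⋃ i, Xs i) ∧
  ∀ ε > (0:ℝ), ∃ M : ℕ, ∀ (k : ℕ) (idx : Fin k → Fin q), Monotone idx →
    ∀ x : Fin k → Y, (∀ j, x j ∈ Xs (idx j)) →
    ∀ n : Fin k → ℕ, (∀ j, 1 ≤ n j) →
    ∃ y ∈ X, ∀ (j : Fin k), ∀ i < n j,
      d (f^[i] (x j)) (f^[i + gapSum n (fun _ => M) j] y) ≤ ε

/-- One-way (W)-specification property of `f` on `X` with the family of sets `Xs`,
with respect to the distance function `d`. -/
def OneWayWSpecWithOn {Y : Type*} [TopologicalSpace Y] (d : Y → Y → ℝ) (f : Y → Y)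
    (X : Set Y) {q : ℕ} (Xs : Fin q → Set Y) : Prop :=
  (∀ i, Xs i ⊆ X) ∧ (∀ i, IsCompact (Xs i)) ∧ (∀ i, f '' Xs i ⊆ Xs i) ∧
  nonWanderingIn f X = (⋃ i, Xs i) ∧
  ∀ ε > (0:ℝ), ∃ M : ℕ, ∀ (k : ℕ) (idx : Fin k → Fin q), Monotone idx →
    ∀ x : Fin k → Y, (∀ j, x j ∈ Xs (idx j)) →
    ∀ n : Fin k → ℕ, (∀ j, 1 ≤ n j) →
    ∃ y ∈ X, ∃ Ms : Fin k → ℕ, (∀ t, Ms t ≤ M) ∧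
      ∀ (j : Fin k), ∀ i < n j,
        d (f^[i] (x j)) (f^[i + gapSum n Ms j] y) ≤ ε

/-- One-way specification property of `f` on `X`. -/
def OneWaySpecOn {Y : Type*} [TopologicalSpace Y] (d : Y → Y → ℝ) (f : Y → Y)
    (X : Set Y) : Prop :=
  ∃ (q : ℕ) (Xs : Fin q → Set Y), OneWaySpecWithOn d f X Xs

/-- One-way (W)-specification property of `f` on `X`. -/
def OneWayWSpecOn {Y : Type*} [TopologicalSpace Y] (d : Y → Y → ℝ) (f : Y → Y)
    (X : Set Y) : Prop :=
  ∃ (q : ℕ) (Xs : Fin q → Set Y), OneWayWSpecWithOn d f X Xs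

/-! ### Symbolic dynamics -/

/-- The one-sided shift map. -/
def shift {A : Type*} : (ℕ → A) → (ℕ → A) := fun ω n => ω (n + 1)

/-- The standard metric `d(ω,ω') = 2^{-min{k : ω_k ≠ ω'_k}}` on sequence spaces. -/
noncomputable def seqDist {A : Type*} [DecidableEq A] (x y : ℕ → A) : ℝ :=
  if h : x = y then 0 else (2 : ℝ)⁻¹ ^ Nat.find (Function.ne_iff.mp h)

/-- The (ambient) cylinder set of a finite word `w`. -/
def cylO {A : Type*} (w : List A) : Set (ℕ → A) :=
  {ω | ∀ (k : ℕ) (h : k < w.length), ω k = w.get ⟨k, h⟩}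

/-- `w` belongs to the language of the subshift `X`. -/
def InLang {A : Type*} (X : Set (ℕ → A)) (w : List A) : Prop :=
  (X ∩ cylO w).Nonempty

/-- The concatenation `w_0 v_0 w_1 v_1 ⋯ v_{k-2} w_{k-1}`. -/
def joinWords {A : Type*} {k : ℕ} (w v : Fin k → List A) : List A :=
  (List.ofFn fun j : Fin k => if (j : ℕ) = k - 1 then w j else w j ++ v j).flatten

end OneWaySpec
namespace OneWaySpec

/-! ### The `(-β)`-transformation -/

/-- `b = max{k ∈ ℤ : k < β}` for `β > 1`. -/
noncomputable def bOf (β : ℝ) : ℕ := ⌈β⌉₊ - 1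

/-- The map `x ↦ -βx + ⌊βx⌋ + 1`, which agrees with the `(-β)`-transformation away from
the branch points `{0, 1/β, …, b/β, 1}`. -/
noncomputable def Tpre (β : ℝ) (x : ℝ) : ℝ := -(β * x) + ⌊β * x⌋ + 1

/-- Symbol of `x`: the `i` with `x ∈ I_i = (i/β, (i+1)/β)` (junk at branch points). -/
noncomputable def symI (β : ℝ) (x : ℝ) : ℕ := (⌊β * x⌋).toNat

/-- The branch-point set `{0, 1/β, …, b/β, 1}`. -/
def bdry (β : ℝ) : Set ℝ := {y | ∃ i : ℕ, i ≤ bOf β ∧ y = (i : ℝ) / β} ∪ {1}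

/-- Points of `[0,1]` whose orbit never meets the branch points. -/
def goodPre (β : ℝ) : Set ℝ := {x ∈ Set.Icc (0:ℝ) 1 | ∀ k : ℕ, (Tpre β)^[k] x ∉ bdry β}

/-- Itinerary of a good point. -/
noncomputable def itinPre (β : ℝ) (x : ℝ) : ℕ → ℕ := fun k => symI β ((Tpre β)^[k] x)

/-- `i'(1)`, the coordinatewise limit of the itineraries `i'(x)` of good points as `x → 1⁻`. -/
noncomputable def itinOne (β : ℝ) : ℕ → ℕ := fun k =>
  limUnder (nhdsWithin 1 (Set.Iio 1) ⊓ Filter.principal (goodPre β))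
    (fun x => itinPre β x k)

/-- `i'(1)` is of the form `(w0)^∞`. -/
def CaseOne (β : ℝ) : Prop :=
  ∃ p : ℕ, 1 ≤ p ∧ (∀ k, itinOne β (k + p) = itinOne β k) ∧ itinOne β (p - 1) = 0

/-- The `(-β)`-transformation `T_{-β} : [0,1] → [0,1]` (as a map of `ℝ`). -/
noncomputable def negBeta (β : ℝ) (x : ℝ) : ℝ :=
  if x = 1 then -β + bOf β + 1
  else if ∃ i : ℕ, 1 ≤ i ∧ i ≤ bOf β ∧ x = (i : ℝ) / β then (if CaseOne β then 0 else 1)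
  else Tpre β x

/-- Points of `[0,1]` whose `T_{-β}`-orbit never meets the branch points. -/
def goodSet (β : ℝ) : Set ℝ := {x ∈ Set.Icc (0:ℝ) 1 | ∀ k : ℕ, (negBeta β)^[k] x ∉ bdry β}

/-- The itinerary `i'(x)` of a point under `T_{-β}`. -/
noncomputable def itin (β : ℝ) (x : ℝ) : ℕ → ℕ := fun k => symI β ((negBeta β)^[k] x)

/-- The symbolic space `Σ_{-β}` of the `(-β)`-transformation. -/
def SigmaNegBeta (β : ℝ) : Set (ℕ → ℕ) := closure (itin β '' goodSet β)

/-- The strict alternating order on sequences. -/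
def altLt (x y : ℕ → ℕ) : Prop :=
  ∃ n : ℕ, (∀ k < n, x k = y k) ∧ (if Even n then y n < x n else x n < y n)

/-- The alternating order on sequences. -/
def altLe (x y : ℕ → ℕ) : Prop := altLt x y ∨ x = y

/-- `β` is a Yrrap number: the orbit of `1` under `T_{-β}` is eventually periodic,
i.e. `i'(1)` is eventually periodic. -/
def Yrrap (β : ℝ) : Prop :=
  ∃ u v : ℕ, 1 ≤ v ∧ ∀ k, u ≤ k → itinOne β (k + v) = itinOne β k

/-- Symbol of `x` for the half-open partition `{J_0, …, J_b}`. -/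
noncomputable def symJ (β : ℝ) (x : ℝ) : ℕ :=
  if CaseOne β then (if x ≤ 1 / β then 0 else (⌈β * x⌉).toNat - 1)
  else (if x = 1 then bOf β else (⌊β * x⌋).toNat)

/-- The coding map `Φ : [0,1] → Σ_{-β}`, `(Φ x)_k = j ↔ T_{-β}^k x ∈ J_j`. -/
noncomputable def PhiMap (β : ℝ) (x : ℝ) : ℕ → ℕ := fun k => symJ β ((negBeta β)^[k] x)

/-- `L_{-β} = L ∘ Φ^{-1}`, as a set function. -/
noncomputable def LnegBeta (β : ℝ) (s : Set (ℕ → ℕ)) : ℝ≥0∞ :=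
  volume (Set.Icc (0:ℝ) 1 ∩ PhiMap β ⁻¹' s)

/-- The `(-β)`-transformation as a self-map of `[0,1]`. -/
noncomputable def negBetaI (β : ℝ) (x : Set.Icc (0:ℝ) 1) : Set.Icc (0:ℝ) 1 :=
  Set.projIcc 0 1 zero_le_one (negBeta β x)

/-- Lebesgue measure on `[0,1]`. -/
noncomputable def lebIcc : Measure (Set.Icc (0:ℝ) 1) :=
  volume.comap Subtype.val

/-! ### Piecewise expanding interval maps and their symbolic spaces -/

/-- Symbol of `x ∈ I_j = (a_j, a_{j+1})`. -/
noncomputable def symA {p : ℕ} (a : Fin (p + 1) → ℝ) (x : ℝ) : ℕ :=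
  (Finset.univ.filter fun i => a i < x).card - 1

/-- Points of `[0,1]` whose orbit never meets the branch points `S = {a_0,…,a_p}`. -/
def goodA {p : ℕ} (a : Fin (p + 1) → ℝ) (f : ℝ → ℝ) : Set ℝ :=
  {x ∈ Set.Icc (0:ℝ) 1 | ∀ (k : ℕ) (i : Fin (p + 1)), f^[k] x ≠ a i}

/-- The itinerary of a point. -/
noncomputable def itinA {p : ℕ} (a : Fin (p + 1) → ℝ) (f : ℝ → ℝ) (x : ℝ) : ℕ → ℕ :=
  fun k => symA a (f^[k] x)

/-- The symbolic space `Σ_f` of a piecewise expanding interval map. -/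
def SigmaA {p : ℕ} (a : Fin (p + 1) → ℝ) (f : ℝ → ℝ) : Set (ℕ → ℕ) :=
  closure (itinA a f '' goodA a f)

/-! ### A metric for the weak topology on measures -/

/-- The metric `D(μ,ν) = ∑_{k≥1} |∫φ_k dμ - ∫φ_k dν| / (2^{k+1}‖φ_k‖)` (indexed from `0`). -/
noncomputable def Dmeas {Y : Type*} [MeasurableSpace Y] [TopologicalSpace Y] [CompactSpace Y]
    (φs : ℕ → C(Y, ℝ)) (μ ν : Measure Y) : ℝ :=
  ∑' k : ℕ, |(∫ x, φs k x ∂μ) - ∫ x, φs k x ∂ν| / (2 ^ (k + 2) * ‖φs k‖)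

end OneWaySpec
namespace OneWaySpec

/-! ### Further auxiliary definitions -/

/-- The restriction of the shift to a shift-invariant subset. -/
def shiftRes {A : Type*} (X : Set (ℕ → A)) (h : ∀ ω ∈ X, shift ω ∈ X) : X → X :=
  fun ω => ⟨shift ω.1, h ω.1 ω.2⟩

/-- The prefix `s_0 s_1 ⋯ s_{m-1}` of a sequence. -/
def pref (s : ℕ → ℕ) (m : ℕ) : List ℕ := (List.range m).map s

/-- The five-branch piecewise linear map of Example 3.1. -/
noncomputable def exMap (x : ℝ) : ℝ :=
  if x < 1 / 6 then 3 * x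
  else if x < 1 / 2 then 3 * x - 1 / 2
  else if x < 2 / 3 then 3 * x - 1
  else if x < 5 / 6 then 3 * x - 3 / 2
  else 3 * x - 2

/-- The branch points of `exMap`. -/
noncomputable def a6 : Fin 6 → ℝ := ![0, 1 / 6, 1 / 2, 2 / 3, 5 / 6, 1]

/-- `exMap` as a self-map of `[0,1]`. -/
noncomputable def exMapI (x : Set.Icc (0:ℝ) 1) : Set.Icc (0:ℝ) 1 :=
  Set.projIcc 0 1 zero_le_one (exMap x)

/-- `sin (2πθ)` as a function on the circle `ℝ/ℤ`. -/
noncomputable def sinC : AddCircle (1:ℝ) → ℝ :=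
  Function.Periodic.lift (f := fun t : ℝ => Real.sin (2 * Real.pi * t)) (c := 1)
    (fun x => by
      simp only
      rw [show 2 * Real.pi * (x + 1) = 2 * Real.pi * x + 2 * Real.pi by ring,
        Real.sin_add_two_pi])

/-- `cos (2πθ)` as a function on the circle `ℝ/ℤ`. -/
noncomputable def cosC : AddCircle (1:ℝ) → ℝ :=
  Function.Periodic.lift (f := fun t : ℝ => Real.cos (2 * Real.pi * t)) (c := 1)
    (fun x => by
      simp only
      rw [show 2 * Real.pi * (x + 1) = 2 * Real.pi * x + 2 * Real.pi by ring,
        Real.cos_add_two_pi])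

/-- The circle map `f(θ) = θ + (1/10) sin (2πθ)` of Example 3.2. -/
noncomputable def circleF (θ : AddCircle (1:ℝ)) : AddCircle (1:ℝ) :=
  θ + ((1 / 10 * sinC θ : ℝ) : AddCircle (1:ℝ))

/-- The potential `φ = max{log f', 0}` for the circle map, `f'(θ) = 1 + (π/5) cos (2πθ)`. -/
noncomputable def circlePhi (θ : AddCircle (1:ℝ)) : ℝ :=
  max (Real.log (1 + Real.pi / 5 * cosC θ)) 0

/-- `g_β(w)`: the minimal `i ≥ 0` such that there are a word `v` of length `i` and symbols
`0 ≤ c < d ≤ b` with `wvc, wvd` in the language of `Σ_{-β}`. -/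
noncomputable def gbw (β : ℝ) (w : List ℕ) : ℕ :=
  sInf {i : ℕ | ∃ v : List ℕ, v.length = i ∧ ∃ c d : ℕ, c < d ∧ d ≤ bOf β ∧
    InLang (SigmaNegBeta β) (w ++ v ++ [c]) ∧ InLang (SigmaNegBeta β) (w ++ v ++ [d])}

/-- `g_β(n) = sup { g_β(w) : w in the language of `Σ_{-β}`, |w| = n }`. -/
noncomputable def gbn (β : ℝ) (n : ℕ) : ℕ :=
  sSup {m : ℕ | ∃ w : List ℕ, w.length = n ∧ InLang (SigmaNegBeta β) w ∧ m = gbw β w}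


namespace MinimalPisotAux
open OneWaySpec

lemma measurable_shift : Measurable (shift : (ℕ → ℕ) → ℕ → ℕ) :=
  measurable_pi_lambda _ fun n => measurable_pi_apply (n + 1)

lemma shift_iterate_apply (n : ℕ) (x : ℕ → ℕ) (k : ℕ) : (shift^[n] x) k = x (k + n) := by
  induction n generalizing x k with
  | zero => rfl
  | succ n ih => rw [Function.iterate_succ_apply, ih]; rfl

variable {β : ℝ}

lemma beta_lt_two (hβ1 : 1 < β) (hβ : β ^ 3 = β + 1) : β < 2 := by
  have hb0 : (0:ℝ) < β := by linarith
  have h1 : β ^ 3 < 2 * β ^ 2 := by nlinarith [sq_nonneg (β - 1)]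
  nlinarith [mul_pos hb0 hb0]

lemma bOf_one (hβ1 : 1 < β) (hβ2 : β < 2) : bOf β = 1 := by
  have h2 : ⌈β⌉₊ = 2 := by
    rw [Nat.ceil_eq_iff (by norm_num)]
    push_cast
    exact ⟨by linarith, by linarith⟩
  simp [bOf, h2]

lemma notMem_bdry (hβ1 : 1 < β) (hβ2 : β < 2) {y : ℝ} (hy : y ∉ bdry β) :
    y ≠ 0 ∧ y ≠ 1 / β ∧ y ≠ 1 := by
  refine ⟨?_, ?_, ?_⟩ <;> rintro rfl <;> apply hy
  · exact Or.inl ⟨0, by simp⟩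
  · exact Or.inl ⟨1, by simp [bOf_one hβ1 hβ2]⟩
  · exact Or.inr rfl

lemma negBeta_step (hβ1 : 1 < β) (hβ2 : β < 2) {y : ℝ} (hIcc : y ∈ Set.Icc (0:ℝ) 1)
    (hy : y ∉ bdry β) :
    negBeta β y = -(β * y) + ⌊β * y⌋ + 1 ∧ 0 < y ∧ y < 1 ∧ 0 ≤ ⌊β * y⌋ ∧ ⌊β * y⌋ ≤ 1 ∧
      negBeta β y ∈ Set.Icc (0:ℝ) 1 := by
  obtain ⟨h0, hb, h1⟩ := notMem_bdry hβ1 hβ2 hy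
  have hy0 : 0 < y := lt_of_le_of_ne hIcc.1 (Ne.symm h0)
  have hy1 : y < 1 := lt_of_le_of_ne hIcc.2 h1
  have hbpos : 0 < β := by linarith
  have hprod : 0 < β * y := mul_pos hbpos hy0
  have hprod2 : β * y < 2 := by nlinarith
  have hf0 : 0 ≤ ⌊β * y⌋ := Int.floor_nonneg.mpr hprod.le
  have hf1 : ⌊β * y⌋ ≤ 1 := by
    have : ⌊β * y⌋ < 2 := Int.floor_lt.mpr (by exact_mod_cast hprod2)
    omega
  have heq : negBeta β y = Tpre β y := by
    unfold negBeta
    rw [if_neg h1, if_neg]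
    rintro ⟨i, hi1, hi2, hiy⟩
    rw [bOf_one hβ1 hβ2] at hi2
    have : i = 1 := le_antisymm hi2 hi1
    subst this
    exact hb (by simpa using hiy)
  have hTpre : Tpre β y = -(β * y) + ⌊β * y⌋ + 1 := rfl
  have hfl : (⌊β * y⌋ : ℝ) ≤ β * y := Int.floor_le _
  have hfu : β * y < ⌊β * y⌋ + 1 := Int.lt_floor_add_one _
  refine ⟨heq.trans hTpre, hy0, hy1, hf0, hf1, ?_⟩
  rw [heq, hTpre]
  exact ⟨by linarith, by linarith⟩

lemma good_orbit (hβ1 : 1 < β) (hβ2 : β < 2) {z : ℝ} (hz : z ∈ goodSet β) :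
    ∀ k, (negBeta β)^[k] z ∈ Set.Icc (0:ℝ) 1 := by
  intro k
  induction k with
  | zero => exact hz.1
  | succ k ih =>
    rw [Function.iterate_succ_apply']
    exact (negBeta_step hβ1 hβ2 ih (hz.2 k)).2.2.2.2.2

lemma good_data (hβ1 : 1 < β) (hβ2 : β < 2) {z : ℝ} (hz : z ∈ goodSet β) (k : ℕ) :
    itin β z k = (⌊β * (negBeta β)^[k] z⌋).toNat ∧
      0 ≤ ⌊β * (negBeta β)^[k] z⌋ ∧ ⌊β * (negBeta β)^[k] z⌋ ≤ 1 ∧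
      (negBeta β)^[k] z < 1 ∧ 0 < (negBeta β)^[k] z ∧
      (negBeta β)^[k + 1] z = -(β * (negBeta β)^[k] z) + ⌊β * (negBeta β)^[k] z⌋ + 1 := by
  have h := negBeta_step hβ1 hβ2 (good_orbit hβ1 hβ2 hz k) (hz.2 k)
  refine ⟨rfl, h.2.2.2.1, h.2.2.2.2.1, h.2.2.1, h.2.1, ?_⟩
  rw [Function.iterate_succ_apply']
  exact h.1

lemma good_no1000 (hβ1 : 1 < β) (hβ : β ^ 3 = β + 1) {z : ℝ} (hz : z ∈ goodSet β) (k : ℕ) :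
    ¬(itin β z k = 1 ∧ itin β z (k + 1) = 0 ∧ itin β z (k + 2) = 0 ∧ itin β z (k + 3) = 0) := by
  have hβ2 : β < 2 := beta_lt_two hβ1 hβ
  have hb0 : (0:ℝ) < β := by linarith
  rintro ⟨e0, e1, e2, e3⟩
  obtain ⟨i0, f0a, f0b, hlt0, hpos0, r0⟩ := good_data hβ1 hβ2 hz k
  obtain ⟨i1, f1a, f1b, hlt1, hpos1, r1⟩ := good_data hβ1 hβ2 hz (k + 1)
  obtain ⟨i2, f2a, f2b, hlt2, hpos2, r2⟩ := good_data hβ1 hβ2 hz (k + 2)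
  obtain ⟨i3, f3a, f3b, hlt3, hpos3, r3⟩ := good_data hβ1 hβ2 hz (k + 3)
  set y0 := (negBeta β)^[k] z
  set y1 := (negBeta β)^[k + 1] z
  set y2 := (negBeta β)^[k + 2] z
  set y3 := (negBeta β)^[k + 3] z
  have g0 : ⌊β * y0⌋ = 1 := by rw [e0] at i0; omega
  have g1 : ⌊β * y1⌋ = 0 := by rw [e1] at i1; omega
  have g2 : ⌊β * y2⌋ = 0 := by rw [e2] at i2; omega
  have g3 : ⌊β * y3⌋ = 0 := by rw [e3] at i3; omega
  have q0 : 1 ≤ β * y0 := by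
    have := (Int.floor_eq_iff.mp g0).1
    exact_mod_cast this
  have h3' : y1 = -(β * y0) + 1 + 1 := by rw [r0, g0]; norm_num
  have h5' : y2 = -(β * y1) + 0 + 1 := by rw [r1, g1]; norm_num
  have h7' : y3 = -(β * y2) + 0 + 1 := by rw [r2, g2]; norm_num
  have h8' : β * y3 < 1 := by
    have := (Int.floor_eq_iff.mp g3).2
    push_cast at this
    linarith
  nlinarith [mul_lt_mul_of_pos_left hlt0 hb0, mul_pos hb0 hb0, sq_nonneg β, sq_nonneg (β - 1),
    mul_pos (mul_pos hb0 hb0) hb0]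

lemma sigma_le_one (hβ1 : 1 < β) (hβ2 : β < 2) {x : ℕ → ℕ} (hx : x ∈ SigmaNegBeta β) (k : ℕ) :
    x k ≤ 1 := by
  have hcl : IsClosed {x : ℕ → ℕ | x k ≤ 1} := by
    rw [show {x : ℕ → ℕ | x k ≤ 1} = (fun x : ℕ → ℕ => x k) ⁻¹' {n | n ≤ 1} from rfl]
    exact (isClosed_discrete _).preimage (continuous_apply k)
  have hsub : SigmaNegBeta β ⊆ {x : ℕ → ℕ | x k ≤ 1} := by
    refine closure_minimal ?_ hcl
    rintro x ⟨z, hz, rfl⟩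
    have h := good_data hβ1 hβ2 hz k
    simp only [Set.mem_setOf_eq]
    omega
  exact hsub hx

lemma sigma_no1000 (hβ1 : 1 < β) (hβ : β ^ 3 = β + 1) {x : ℕ → ℕ} (hx : x ∈ SigmaNegBeta β)
    (k : ℕ) :
    ¬(x k = 1 ∧ x (k + 1) = 0 ∧ x (k + 2) = 0 ∧ x (k + 3) = 0) := by
  have hβ2 : β < 2 := beta_lt_two hβ1 hβ
  have hop : IsOpen {x : ℕ → ℕ | x k = 1 ∧ x (k + 1) = 0 ∧ x (k + 2) = 0 ∧ x (k + 3) = 0} := by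
    have : {x : ℕ → ℕ | x k = 1 ∧ x (k + 1) = 0 ∧ x (k + 2) = 0 ∧ x (k + 3) = 0} =
        (fun x : ℕ → ℕ => x k) ⁻¹' {1} ∩ ((fun x : ℕ → ℕ => x (k + 1)) ⁻¹' {0} ∩
          ((fun x : ℕ → ℕ => x (k + 2)) ⁻¹' {0} ∩ (fun x : ℕ → ℕ => x (k + 3)) ⁻¹' {0})) := by
      ext x; simp [Set.mem_inter_iff, and_assoc]
    rw [this]
    exact ((isOpen_discrete _).preimage (continuous_apply k)).inter
      (((isOpen_discrete _).preimage (continuous_apply (k + 1))).inter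
        (((isOpen_discrete _).preimage (continuous_apply (k + 2))).inter
          ((isOpen_discrete _).preimage (continuous_apply (k + 3)))))
  have hcl : IsClosed {x : ℕ → ℕ | ¬(x k = 1 ∧ x (k + 1) = 0 ∧ x (k + 2) = 0 ∧ x (k + 3) = 0)} := by
    rw [show {x : ℕ → ℕ | ¬(x k = 1 ∧ x (k + 1) = 0 ∧ x (k + 2) = 0 ∧ x (k + 3) = 0)} =
      {x : ℕ → ℕ | x k = 1 ∧ x (k + 1) = 0 ∧ x (k + 2) = 0 ∧ x (k + 3) = 0}ᶜ from rfl]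
    exact hop.isClosed_compl
  have hsub : SigmaNegBeta β ⊆
      {x : ℕ → ℕ | ¬(x k = 1 ∧ x (k + 1) = 0 ∧ x (k + 2) = 0 ∧ x (k + 3) = 0)} := by
    refine closure_minimal ?_ hcl
    rintro x ⟨z, hz, rfl⟩
    exact good_no1000 hβ1 hβ hz k
  exact hsub hx

lemma sigma_no_000 (hβ1 : 1 < β) (hβ : β ^ 3 = β + 1) {x : ℕ → ℕ} (hx : x ∈ SigmaNegBeta β)
    {k : ℕ} (hk : x k = 1) :
    ∀ m, k < m → ¬(x m = 0 ∧ x (m + 1) = 0 ∧ x (m + 2) = 0) := by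
  have hβ2 : β < 2 := beta_lt_two hβ1 hβ
  intro m
  induction m using Nat.strong_induction_on with
  | _ m ih =>
    rintro hkm ⟨h0, h1, h2⟩
    obtain ⟨j, rfl⟩ : ∃ j, m = j + 1 := ⟨m - 1, by omega⟩
    have hjle := sigma_le_one hβ1 hβ2 hx j
    rcases (by omega : x j = 0 ∨ x j = 1) with hj | hj
    · have hkj : k < j := by
        rcases Nat.lt_or_ge k j with h | h
        · exact h
        · exfalso
          have hkj' : k = j := by omega
          rw [hkj', hj] at hk
          exact absurd hk (by omega)
      exact ih j (by omega) hkj ⟨hj, h0, h1⟩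
    · refine sigma_no1000 hβ1 hβ hx j ⟨hj, h0, ?_, ?_⟩
      · rw [show j + 2 = (j + 1) + 1 from rfl]; exact h1
      · rw [show j + 3 = (j + 1) + 2 from rfl]; exact h2

lemma const_zero_mem (hβ1 : 1 < β) (hβ : β ^ 3 = β + 1) :
    (fun _ => 0 : ℕ → ℕ) ∈ SigmaNegBeta β := by
  have hβ2 : β < 2 := beta_lt_two hβ1 hβ
  have hb0 : (0:ℝ) < β := by linarith
  have hd : (0:ℝ) < 1 + β := by linarith
  set x0 : ℝ := 1 / (1 + β) with hx0
  have hx0pos : 0 < x0 := by positivity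
  have hx0lt : x0 < 1 := by
    rw [hx0, div_lt_one hd]; linarith
  have hIcc : x0 ∈ Set.Icc (0:ℝ) 1 := ⟨hx0pos.le, hx0lt.le⟩
  have hbdry : x0 ∉ bdry β := by
    rintro (⟨i, hi, he⟩ | he)
    · rw [bOf_one hβ1 hβ2] at hi
      interval_cases i
      · rw [he] at hx0pos; simp at hx0pos
      · have : (1:ℝ) / (1 + β) = 1 / β := by simpa [hx0] using he
        rw [div_eq_div_iff hd.ne' hb0.ne'] at this
        linarith
    · rw [Set.mem_singleton_iff] at he
      rw [he] at hx0lt; linarith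
  have hfloor : ⌊β * x0⌋ = 0 := by
    rw [Int.floor_eq_zero_iff]
    constructor
    · positivity
    · rw [hx0]
      rw [show β * (1 / (1 + β)) = β / (1 + β) by ring, div_lt_one hd]
      linarith
  have hfix : negBeta β x0 = x0 := by
    have h := negBeta_step hβ1 hβ2 hIcc hbdry
    rw [h.1, hfloor]
    push_cast
    rw [hx0]
    field_simp
    ring
  have hgood : x0 ∈ goodSet β :=
    ⟨hIcc, fun k => by rw [Function.iterate_fixed hfix]; exact hbdry⟩
  have hitin : itin β x0 = (fun _ => 0 : ℕ → ℕ) := by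
    funext k
    simp [itin, Function.iterate_fixed hfix, symI, hfloor]
  exact subset_closure ⟨x0, hgood, hitin⟩

lemma const_one_mem (hβ1 : 1 < β) (hβ : β ^ 3 = β + 1) :
    (fun _ => 1 : ℕ → ℕ) ∈ SigmaNegBeta β := by
  have hβ2 : β < 2 := beta_lt_two hβ1 hβ
  have hb0 : (0:ℝ) < β := by linarith
  have hd : (0:ℝ) < 1 + β := by linarith
  set x1 : ℝ := 2 / (1 + β) with hx1
  have hx1pos : 0 < x1 := by positivity
  have hx1lt : x1 < 1 := by
    rw [hx1, div_lt_one hd]; linarith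
  have hIcc : x1 ∈ Set.Icc (0:ℝ) 1 := ⟨hx1pos.le, hx1lt.le⟩
  have hbdry : x1 ∉ bdry β := by
    rintro (⟨i, hi, he⟩ | he)
    · rw [bOf_one hβ1 hβ2] at hi
      interval_cases i
      · rw [he] at hx1pos; simp at hx1pos
      · have : (2:ℝ) / (1 + β) = 1 / β := by simpa [hx1] using he
        rw [div_eq_div_iff hd.ne' hb0.ne'] at this
        linarith
    · rw [Set.mem_singleton_iff] at he
      rw [he] at hx1lt; linarith
  have hfloor : ⌊β * x1⌋ = 1 := by
    rw [Int.floor_eq_iff]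
    constructor
    · push_cast
      rw [hx1, show β * (2 / (1 + β)) = 2 * β / (1 + β) by ring, le_div_iff₀ hd]
      linarith
    · push_cast
      rw [hx1, show β * (2 / (1 + β)) = 2 * β / (1 + β) by ring, div_lt_iff₀ hd]
      linarith
  have hfix : negBeta β x1 = x1 := by
    have h := negBeta_step hβ1 hβ2 hIcc hbdry
    rw [h.1, hfloor]
    push_cast
    rw [hx1]
    field_simp
    ring
  have hgood : x1 ∈ goodSet β :=
    ⟨hIcc, fun k => by rw [Function.iterate_fixed hfix]; exact hbdry⟩
  have hitin : itin β x1 = (fun _ => 1 : ℕ → ℕ) := by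
    funext k
    simp [itin, Function.iterate_fixed hfix, symI, hfloor]
  exact subset_closure ⟨x1, hgood, hitin⟩

/-- The open set of sequences starting with three `0`s. -/
def V0 : Set (ℕ → ℕ) := {x | x 0 = 0 ∧ x 1 = 0 ∧ x 2 = 0}

/-- The open set of sequences starting with a `1`. -/
def V1 : Set (ℕ → ℕ) := {x | x 0 = 1}

lemma V0_eq : V0 = (fun x : ℕ → ℕ => x 0) ⁻¹' {0} ∩
    ((fun x : ℕ → ℕ => x 1) ⁻¹' {0} ∩ (fun x : ℕ → ℕ => x 2) ⁻¹' {0}) := by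
  ext x; simp [V0, and_assoc]

lemma V1_eq : V1 = (fun x : ℕ → ℕ => x 0) ⁻¹' {1} := rfl

lemma V0_open : IsOpen V0 := by
  rw [V0_eq]
  exact ((isOpen_discrete _).preimage (continuous_apply 0)).inter
    (((isOpen_discrete _).preimage (continuous_apply 1)).inter
      ((isOpen_discrete _).preimage (continuous_apply 2)))

lemma V1_open : IsOpen V1 := by
  rw [V1_eq]
  exact (isOpen_discrete _).preimage (continuous_apply 0)

lemma V0_mble : MeasurableSet V0 := by
  rw [V0_eq]
  exact (measurable_pi_apply 0 (measurableSet_singleton 0)).inter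
    ((measurable_pi_apply 1 (measurableSet_singleton 0)).inter
      (measurable_pi_apply 2 (measurableSet_singleton 0)))

lemma V1_mble : MeasurableSet V1 := by
  rw [V1_eq]
  exact measurable_pi_apply 0 (measurableSet_singleton 1)

/-- The measure `½ δ_{0^∞} + ½ δ_{1^∞}`. -/
noncomputable def muHalf : Measure (ℕ → ℕ) :=
  (2:ℝ≥0∞)⁻¹ • Measure.dirac (fun _ => 0) + (2:ℝ≥0∞)⁻¹ • Measure.dirac (fun _ => 1)

instance : IsProbabilityMeasure muHalf := by
  constructor
  rw [muHalf, Measure.add_apply, Measure.smul_apply, Measure.smul_apply,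
    measure_univ, measure_univ]
  rw [smul_eq_mul, mul_one, ENNReal.inv_two_add_inv_two]

lemma muHalf_map : muHalf.map shift = muHalf := by
  rw [muHalf, Measure.map_add _ _ measurable_shift, Measure.map_smul, Measure.map_smul,
    Measure.map_dirac' measurable_shift, Measure.map_dirac' measurable_shift]
  rfl

lemma muHalf_V0 : muHalf V0 = 2⁻¹ := by
  rw [muHalf, Measure.add_apply, Measure.smul_apply, Measure.smul_apply,
    Measure.dirac_apply_of_mem (show (fun _ => 0 : ℕ → ℕ) ∈ V0 from ⟨rfl, rfl, rfl⟩),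
    Measure.dirac_apply' _ V0_mble, Set.indicator_of_notMem (by simp [V0])]
  simp

lemma muHalf_V1 : muHalf V1 = 2⁻¹ := by
  rw [muHalf, Measure.add_apply, Measure.smul_apply, Measure.smul_apply,
    Measure.dirac_apply_of_mem (show (fun _ => 1 : ℕ → ℕ) ∈ V1 from rfl),
    Measure.dirac_apply' _ V1_mble, Set.indicator_of_notMem (by simp [V1])]
  simp

lemma muHalf_sigma (hβ1 : 1 < β) (hβ : β ^ 3 = β + 1) : muHalf (SigmaNegBeta β) = 1 := by
  rw [muHalf, Measure.add_apply, Measure.smul_apply, Measure.smul_apply,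
    Measure.dirac_apply_of_mem (const_zero_mem hβ1 hβ),
    Measure.dirac_apply_of_mem (const_one_mem hβ1 hβ)]
  rw [smul_eq_mul, mul_one, ENNReal.inv_two_add_inv_two]

end MinimalPisotAux

end OneWaySpec
open OneWaySpec in
/-- **Example 6.5 (part).** For the minimal Pisot number `β` (the real root of
`x³ = x + 1`), the ergodic shift-invariant probability measures on `Σ_{-β}` are not dense
in the shift-invariant probability measures on `Σ_{-β}`. -/
theorem minimal_pisot_ergodic_not_dense
    (β : ℝ) (hβ1 : 1 < β) (hβ : β ^ 3 = β + 1) :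
    ¬ ({μ : ProbabilityMeasure (ℕ → ℕ) |
          (μ : Measure (ℕ → ℕ)) (SigmaNegBeta β) = 1 ∧
          (μ : Measure (ℕ → ℕ)).map shift = (μ : Measure (ℕ → ℕ))} ⊆
        closure {μ : ProbabilityMeasure (ℕ → ℕ) |
          (μ : Measure (ℕ → ℕ)) (SigmaNegBeta β) = 1 ∧
          Ergodic shift (μ : Measure (ℕ → ℕ))}) := by
  intro hsub
  set μP : ProbabilityMeasure (ℕ → ℕ) := ⟨MinimalPisotAux.muHalf, inferInstance⟩ with hμP
  have hmem : μP ∈ {μ : ProbabilityMeasure (ℕ → ℕ) |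
      (μ : Measure (ℕ → ℕ)) (SigmaNegBeta β) = 1 ∧
      (μ : Measure (ℕ → ℕ)).map shift = (μ : Measure (ℕ → ℕ))} :=
    ⟨MinimalPisotAux.muHalf_sigma hβ1 hβ, MinimalPisotAux.muHalf_map⟩
  have hcl : (nhdsWithin μP {μ : ProbabilityMeasure (ℕ → ℕ) |
      (μ : Measure (ℕ → ℕ)) (SigmaNegBeta β) = 1 ∧
      Ergodic shift (μ : Measure (ℕ → ℕ))}).NeBot :=
    mem_closure_iff_nhdsWithin_neBot.mp (hsub hmem)
  set L := nhdsWithin μP {μ : ProbabilityMeasure (ℕ → ℕ) |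
      (μ : Measure (ℕ → ℕ)) (SigmaNegBeta β) = 1 ∧
      Ergodic shift (μ : Measure (ℕ → ℕ))} with hLdef
  haveI : L.NeBot := hcl
  have htend : Filter.Tendsto (fun ν : ProbabilityMeasure (ℕ → ℕ) => ν) L (nhds μP) :=
    Filter.tendsto_id.mono_left nhdsWithin_le_nhds
  have hlim0 : (μP : Measure (ℕ → ℕ)) MinimalPisotAux.V0 ≤
      L.liminf fun ν : ProbabilityMeasure (ℕ → ℕ) => (ν : Measure (ℕ → ℕ)) MinimalPisotAux.V0 :=
    le_measure_liminf_of_limsup_measure_compl_le MinimalPisotAux.V0_mble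
      (ProbabilityMeasure.limsup_measure_closed_le_of_tendsto htend
        MinimalPisotAux.V0_open.isClosed_compl)
  have hlim1 : (μP : Measure (ℕ → ℕ)) MinimalPisotAux.V1 ≤
      L.liminf fun ν : ProbabilityMeasure (ℕ → ℕ) => (ν : Measure (ℕ → ℕ)) MinimalPisotAux.V1 :=
    le_measure_liminf_of_limsup_measure_compl_le MinimalPisotAux.V1_mble
      (ProbabilityMeasure.limsup_measure_closed_le_of_tendsto htend
        MinimalPisotAux.V1_open.isClosed_compl)
  have hv0 : (μP : Measure (ℕ → ℕ)) MinimalPisotAux.V0 = 2⁻¹ := MinimalPisotAux.muHalf_V0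
  have hv1 : (μP : Measure (ℕ → ℕ)) MinimalPisotAux.V1 = 2⁻¹ := MinimalPisotAux.muHalf_V1
  have h42 : (4:ℝ≥0∞)⁻¹ < 2⁻¹ := by rw [ENNReal.inv_lt_inv]; norm_num
  rw [hv0] at hlim0
  rw [hv1] at hlim1
  have e0 : ∀ᶠ (ν : ProbabilityMeasure (ℕ → ℕ)) in L, (4:ℝ≥0∞)⁻¹ < (ν : Measure (ℕ → ℕ)) MinimalPisotAux.V0 :=
    Filter.eventually_lt_of_lt_liminf (h42.trans_le hlim0)
  have e1 : ∀ᶠ (ν : ProbabilityMeasure (ℕ → ℕ)) in L, (4:ℝ≥0∞)⁻¹ < (ν : Measure (ℕ → ℕ)) MinimalPisotAux.V1 :=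
    Filter.eventually_lt_of_lt_liminf (h42.trans_le hlim1)
  have eB : ∀ᶠ ν in L, ν ∈ {μ : ProbabilityMeasure (ℕ → ℕ) |
      (μ : Measure (ℕ → ℕ)) (SigmaNegBeta β) = 1 ∧
      Ergodic shift (μ : Measure (ℕ → ℕ))} := eventually_mem_nhdsWithin
  obtain ⟨ν, ⟨⟨hnuSig, hνerg⟩, hν0⟩, hν1⟩ := ((eB.and e0).and e1).exists
  set W := ⋃ n : ℕ, shift^[n] ⁻¹' MinimalPisotAux.V0 with hWdef
  have hWm : MeasurableSet W :=
    MeasurableSet.iUnion fun n =>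
      MinimalPisotAux.V0_mble.preimage (MinimalPisotAux.measurable_shift.iterate n)
  have hpre : shift ⁻¹' W ⊆ W := by
    intro x hx
    simp only [hWdef, Set.mem_preimage, Set.mem_iUnion] at hx ⊢
    obtain ⟨n, hn⟩ := hx
    exact ⟨n + 1, by rwa [Function.iterate_succ_apply]⟩
  rcases hνerg.ae_empty_or_univ_of_preimage_ae_le' hWm.nullMeasurableSet hpre.eventuallyLE
      (measure_ne_top _ _) with hempty | huniv
  · have hzero : (ν : Measure (ℕ → ℕ)) W = 0 := by
      rw [measure_congr hempty]; exact measure_empty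
    have hsubW : MinimalPisotAux.V0 ⊆ W := fun x hx => Set.mem_iUnion.mpr ⟨0, hx⟩
    have hle : (ν : Measure (ℕ → ℕ)) MinimalPisotAux.V0 = 0 :=
      le_antisymm (hzero ▸ measure_mono hsubW) zero_le
    rw [hle] at hν0
    simp at hν0
  · have hSigcl : IsClosed (SigmaNegBeta β) := isClosed_closure
    have hcompl : (ν : Measure (ℕ → ℕ)) (SigmaNegBeta β)ᶜ = 0 := by
      rw [measure_compl hSigcl.measurableSet (measure_ne_top _ _), hnuSig, measure_univ, tsub_self]
    have hkey : (ν : Measure (ℕ → ℕ)) ((MinimalPisotAux.V1 ∩ SigmaNegBeta β) ∩ W) =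
        (ν : Measure (ℕ → ℕ)) (MinimalPisotAux.V1 ∩ SigmaNegBeta β) := by
      have h1 : ((MinimalPisotAux.V1 ∩ SigmaNegBeta β) ∩ W : Set (ℕ → ℕ))
          =ᵐ[(ν : Measure (ℕ → ℕ))]
          ((MinimalPisotAux.V1 ∩ SigmaNegBeta β) ∩ Set.univ : Set (ℕ → ℕ)) :=
        Filter.EventuallyEq.inter (Filter.EventuallyEq.refl _ _) huniv
      rw [measure_congr h1, Set.inter_univ]
    have hV1S : (ν : Measure (ℕ → ℕ)) (MinimalPisotAux.V1 ∩ SigmaNegBeta β) =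
        (ν : Measure (ℕ → ℕ)) MinimalPisotAux.V1 := measure_inter_conull hcompl
    have hpos : (ν : Measure (ℕ → ℕ)) ((MinimalPisotAux.V1 ∩ SigmaNegBeta β) ∩ W) ≠ 0 := by
      rw [hkey, hV1S]
      exact (zero_le.trans_lt hν1).ne'
    have hexists : ∃ n : ℕ, (ν : Measure (ℕ → ℕ))
        ((MinimalPisotAux.V1 ∩ SigmaNegBeta β) ∩ shift^[n] ⁻¹' MinimalPisotAux.V0) ≠ 0 := by
      by_contra h
      push_neg at h
      apply hpos
      rw [hWdef, Set.inter_iUnion]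
      exact measure_iUnion_null fun n => h n
    obtain ⟨n, hn⟩ := hexists
    obtain ⟨x, ⟨⟨hxV1, hxSig⟩, hxn⟩⟩ := nonempty_of_measure_ne_zero hn
    have hx0 : x 0 = 1 := hxV1
    have hc0 : x n = 0 := by
      have h := hxn.1
      rwa [MinimalPisotAux.shift_iterate_apply, Nat.zero_add] at h
    have hc1 : x (n + 1) = 0 := by
      have h := hxn.2.1
      rwa [MinimalPisotAux.shift_iterate_apply, Nat.add_comm] at h
    have hc2 : x (n + 2) = 0 := by
      have h := hxn.2.2
      rwa [MinimalPisotAux.shift_iterate_apply, Nat.add_comm] at h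
    rcases Nat.eq_zero_or_pos n with rfl | hn0
    · rw [hx0] at hc0
      exact absurd hc0 (by omega)
    · exact MinimalPisotAux.sigma_no_000 hβ1 hβ hxSig hx0 n hn0 ⟨hc0, hc1, hc2⟩
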